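/- arXiv:2001.00315 — 8 statements merged into one kernel-verified Lean document; each statement's English description precedes it below -/
import Mathlib

section
/- For every monotone E3CNF formula φ with n variables and m clauses, the minimum number of tuples whose deletion from I_φ leaves an instance consistent with respect to {A → B, B → C} equals 3m − #τ_max(φ); that is, opt(I_φ) = 3m − #τ_max(φ). -/
/-- A functional dependency `X → Y` is a pair of attribute sets; two tuples form a
`φ`-conflict if they agree on every attribute of `X` but differ on some attribute of `Y`. -/
def IsPhiConflict {α V : Type*} (X Y : Finset α) (s t : α → V) : Prop :=
  (∀ a ∈ X, s a = t a) ∧ (∃ a ∈ Y, s a ≠ t a)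

instance {α V : Type*} [DecidableEq V] (X Y : Finset α) (s t : α → V) :
    Decidable (IsPhiConflict X Y s t) := by
  unfold IsPhiConflict; infer_instance

/-- Two tuples form a conflict w.r.t. a finite FD set if they form a `φ`-conflict
for some FD `φ` of the set. -/
def IsConflict {α V : Type*} (FDs : Finset (Finset α × Finset α)) (s t : α → V) : Prop :=
  ∃ fd ∈ FDs, IsPhiConflict fd.1 fd.2 s t

instance {α V : Type*} [DecidableEq V] (FDs : Finset (Finset α × Finset α)) (s t : α → V) :
    Decidable (IsConflict FDs s t) := by
  unfold IsConflict; infer_instance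

/-- A set of tuples is consistent w.r.t. an FD set if no two of its tuples form a conflict. -/
def Consistent {α V : Type*} (FDs : Finset (Finset α × Finset α)) (J : Finset (α → V)) : Prop :=
  ∀ s ∈ J, ∀ t ∈ J, ¬ IsConflict FDs s t

/-- `opt FDs I` is the minimum of `dist(J,I) = |I| - |J|` over all consistent subsets `J ⊆ I`. -/
noncomputable def opt {α V : Type*} (FDs : Finset (Finset α × Finset α))
    (I : Finset (α → V)) : ℕ :=
  sInf {d : ℕ | ∃ J ⊆ I, Consistent FDs J ∧ d = I.card - J.card}

/-- A monotone E3CNF formula with `n` variables and `m` clauses: each clause has exactly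
three literals over pairwise distinct variables and is monotone, i.e. all its literals have
the same polarity `pol i` (`true` = all positive, `false` = all negative). -/
structure MonotoneE3CNF (n m : ℕ) where
  lit : Fin m → Fin 3 → Fin n
  pol : Fin m → Bool
  distinct : ∀ i, Function.Injective (lit i)

/-- The number of clauses satisfied by assignment `τ`. -/
def MonotoneE3CNF.numSat {n m : ℕ} (φ : MonotoneE3CNF n m) (τ : Fin n → Bool) : ℕ :=
  (Finset.univ.filter fun i : Fin m => ∃ k, τ (φ.lit i k) = φ.pol i).card

/-- `#τ_max(φ)`: the maximum number of simultaneously satisfiable clauses. -/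
def MonotoneE3CNF.maxSat {n m : ℕ} (φ : MonotoneE3CNF n m) : ℕ :=
  Finset.univ.sup fun τ : Fin n → Bool => φ.numSat τ

/-- Values used in the instance `I_φ`: clause indices `i`, variable indices `j`,
and for each variable `j` two constants `j⁺ = (j, true)` and `j⁻ = (j, false)`;
all pairwise distinct. -/
abbrev Val0 (n m : ℕ) := Sum (Fin m) (Sum (Fin n) (Fin n × Bool))

/-- The tuple built for the `k`-th literal of clause `i`: `(i, j, j⁺)` if the variable
`j = lit i k` occurs positively, `(i, j, j⁻)` if it occurs negatively. -/
def tuple0 {n m : ℕ} (φ : MonotoneE3CNF n m) (i : Fin m) (k : Fin 3) : Fin 3 → Val0 n m :=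
  ![Sum.inl i, Sum.inr (Sum.inl (φ.lit i k)), Sum.inr (Sum.inr (φ.lit i k, φ.pol i))]

/-- The instance `I_φ` over attributes `A = 0`, `B = 1`, `C = 2`. -/
def Iphi0 {n m : ℕ} (φ : MonotoneE3CNF n m) : Finset (Fin 3 → Val0 n m) :=
  Finset.univ.image fun p : Fin m × Fin 3 => tuple0 φ p.1 p.2

/-- The FD set `{A → B, B → C}`. -/
def Sigma0 : Finset (Finset (Fin 3) × Finset (Fin 3)) := {({0}, {1}), ({1}, {2})}

/-! A consistent subset of `I_φ` keeps at most one tuple per clause (`A → B`, as the variables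
of a clause are distinct) and never both a `j⁺`- and a `j⁻`-tuple of one variable (`B → C`).
Setting `x_j` true exactly when some kept tuple carries `j⁺`, every kept tuple becomes a true
literal of its clause, so at most `#τ(φ)` tuples are kept. Conversely, one true literal per
satisfied clause of `τ` gives a consistent subset of size `#τ(φ)`. -/

theorem opt_eq_card_sub_of_isGreatest {α V : Type*} {FDs : Finset (Finset α × Finset α)}
    {I : Finset (α → V)} {k : ℕ}
    (hk : IsGreatest {c | ∃ J ⊆ I, Consistent FDs J ∧ J.card = c} k) :
    opt FDs I = I.card - k := by
  obtain ⟨⟨J₀, hJ₀I, hJ₀, rfl⟩, hmax⟩ := hk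
  refine le_antisymm (Nat.sInf_le ⟨J₀, hJ₀I, hJ₀, rfl⟩) (le_csInf ⟨_, J₀, hJ₀I, hJ₀, rfl⟩ ?_)
  rintro _ ⟨J, hJI, hJ, rfl⟩
  exact Nat.sub_le_sub_left (hmax ⟨J, hJI, hJ, rfl⟩) _

theorem isConflict_Sigma0_iff {V : Type*} (s t : Fin 3 → V) :
    IsConflict Sigma0 s t ↔ (s 0 = t 0 ∧ s 1 ≠ t 1) ∨ (s 1 = t 1 ∧ s 2 ≠ t 2) := by
  simp [IsConflict, IsPhiConflict, Sigma0]

namespace MonotoneE3CNF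

variable {n m : ℕ} (φ : MonotoneE3CNF n m)

theorem tuple0_inj {i i' : Fin m} {k k' : Fin 3} :
    tuple0 φ i k = tuple0 φ i' k' ↔ i = i' ∧ k = k' := by
  refine ⟨fun h => ?_, fun ⟨hi, hk⟩ => hi ▸ hk ▸ rfl⟩
  obtain rfl : i = i' := by simpa [tuple0] using congrFun h 0
  exact ⟨rfl, φ.distinct i (by simpa [tuple0] using congrFun h 1)⟩

theorem isConflict_tuple0_iff {i i' : Fin m} {k k' : Fin 3} :
    IsConflict Sigma0 (tuple0 φ i k) (tuple0 φ i' k') ↔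
      (i = i' ∧ k ≠ k') ∨ (φ.lit i k = φ.lit i' k' ∧ φ.pol i ≠ φ.pol i') := by
  rw [isConflict_Sigma0_iff]
  simp only [tuple0, Matrix.cons_val, Sum.inl.injEq, Sum.inr.injEq, Prod.mk.injEq, ne_eq,
    not_and]
  constructor
  · rintro (⟨rfl, h⟩ | ⟨h, h'⟩)
    · exact Or.inl ⟨rfl, fun hk => h (hk ▸ rfl)⟩
    · exact Or.inr ⟨h, h' h⟩
  · rintro (⟨rfl, h⟩ | ⟨h, h'⟩)
    · exact Or.inl ⟨rfl, fun hk => h (φ.distinct i hk)⟩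
    · exact Or.inr ⟨h, fun _ => h'⟩

theorem card_Iphi0 : (Iphi0 φ).card = 3 * m := by
  rw [Iphi0, Finset.card_image_of_injective _ fun p q h => Prod.ext_iff.2 ((φ.tuple0_inj).1 h)]
  simp [mul_comm]

theorem exists_consistent_card_eq_numSat (τ : Fin n → Bool) :
    ∃ J ⊆ Iphi0 φ, Consistent Sigma0 J ∧ J.card = φ.numSat τ := by
  set S := Finset.univ.filter fun i : Fin m => ∃ k, τ (φ.lit i k) = φ.pol i
  have hS : ∀ i : S, ∃ k, τ (φ.lit i k) = φ.pol i := fun i => (Finset.mem_filter.1 i.2).2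
  choose sel hsel using hS
  refine ⟨Finset.univ.image fun i : S => tuple0 φ i (sel i), ?_, ?_, ?_⟩
  · intro t ht
    obtain ⟨i, -, rfl⟩ := Finset.mem_image.1 ht
    exact Finset.mem_image_of_mem _ (Finset.mem_univ ((i : Fin m), sel i))
  · intro s hs t ht
    obtain ⟨i, -, rfl⟩ := Finset.mem_image.1 hs
    obtain ⟨j, -, rfl⟩ := Finset.mem_image.1 ht
    rw [isConflict_tuple0_iff]
    rintro (⟨hij, hne⟩ | ⟨hlit, hne⟩)
    · exact hne (Subtype.ext hij ▸ rfl)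
    · exact hne (by rw [← hsel i, ← hsel j, hlit])
  · rw [Finset.card_image_of_injective _ fun i j h => Subtype.ext ((φ.tuple0_inj).1 h).1,
      Finset.card_univ, Fintype.card_coe]
    rfl

theorem exists_card_le_numSat {J : Finset (Fin 3 → Val0 n m)} (hJI : J ⊆ Iphi0 φ)
    (hJ : Consistent Sigma0 J) : ∃ τ, J.card ≤ φ.numSat τ := by
  let τ (j : Fin n) : Bool := decide (∃ t ∈ J, t 2 = Sum.inr (Sum.inr (j, true)))
  have hsat {i k} (ht : tuple0 φ i k ∈ J) : τ (φ.lit i k) = φ.pol i := by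
    cases hpol : φ.pol i
    · refine decide_eq_false ?_
      rintro ⟨s, hs, hs2⟩
      obtain ⟨⟨i', k'⟩, -, rfl⟩ := Finset.mem_image.1 (hJI hs)
      simp only [tuple0, Matrix.cons_val, Sum.inr.injEq, Prod.mk.injEq] at hs2
      refine hJ _ hs _ ht ((φ.isConflict_tuple0_iff).2 (Or.inr ⟨hs2.1, ?_⟩))
      rw [hs2.2, hpol]
      decide
    · exact decide_eq_true ⟨_, ht, by simp [tuple0, hpol]⟩
  set P := Finset.univ.filter fun p : Fin m × Fin 3 => tuple0 φ p.1 p.2 ∈ J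
  have hJP : J ⊆ P.image fun p => tuple0 φ p.1 p.2 := by
    intro t ht
    obtain ⟨p, -, rfl⟩ := Finset.mem_image.1 (hJI ht)
    exact Finset.mem_image_of_mem _ (Finset.mem_filter.2 ⟨Finset.mem_univ _, ht⟩)
  have hPS : P.card ≤ φ.numSat τ := by
    refine Finset.card_le_card_of_injOn Prod.fst (fun p hp => ?_) (fun p hp q hq hpq => ?_)
    · exact Finset.mem_filter.2 ⟨Finset.mem_univ _, p.2, hsat (Finset.mem_filter.1 hp).2⟩
    · refine Prod.ext hpq (by_contra fun hne => ?_)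
      exact hJ _ (Finset.mem_filter.1 hp).2 _ (Finset.mem_filter.1 hq).2
        ((φ.isConflict_tuple0_iff).2 (Or.inl ⟨hpq, hne⟩))
  exact ⟨τ, (Finset.card_le_card hJP).trans (Finset.card_image_le.trans hPS)⟩

theorem isGreatest_card_consistent :
    IsGreatest {c | ∃ J ⊆ Iphi0 φ, Consistent Sigma0 J ∧ J.card = c} φ.maxSat := by
  refine ⟨?_, ?_⟩
  · obtain ⟨τ, -, hτ⟩ := Finset.exists_mem_eq_sup Finset.univ Finset.univ_nonempty φ.numSat
    rw [maxSat, hτ]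
    exact φ.exists_consistent_card_eq_numSat τ
  · rintro _ ⟨J, hJI, hJ, rfl⟩
    obtain ⟨τ, hτ⟩ := φ.exists_card_le_numSat hJI hJ
    exact hτ.trans (Finset.le_sup (Finset.mem_univ τ))

end MonotoneE3CNF

/-- For every monotone E3CNF formula `φ` with `n` variables and `m` clauses,
`opt(I_φ) = 3m − #τ_max(φ)` with respect to `{A → B, B → C}`. -/
theorem stmt0 {n m : ℕ} (φ : MonotoneE3CNF n m) :
    opt Sigma0 (Iphi0 φ) = 3 * m - φ.maxSat := by
  rw [opt_eq_card_sub_of_isGreatest φ.isGreatest_card_consistent, φ.card_Iphi0]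
end

section
/- Let Σ = {φ_1 : X_1 → Y_1, …, φ_σ : X_σ → Y_σ} be a finite FD set and I a nonempty instance. Then I can be partitioned into at most max_{t ∈ I} ∏_{i=1}^σ |[t.X_i]| classes, each of which is consistent with respect to Σ. -/
lemma greedy_color {β : Type*} [DecidableEq β] (r : β → β → Prop) [DecidableRel r]
    (hsym : ∀ a b, r a b → r b a) (hirr : ∀ a, ¬ r a a) :
    ∀ l : List β, l.Nodup → ∃ f : β → ℕ,
      (∀ t ∈ l, f t ≤ (l.filter (fun s => r t s)).length) ∧
      (∀ s ∈ l, ∀ t ∈ l, f s = f t → ¬ r s t) := by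
  intro l hl
  induction l with
  | nil => exact ⟨fun _ => 0, by simp, by simp⟩
  | cons t l ih =>
    obtain ⟨f, hb, hp⟩ := ih hl.of_cons
    have htl : t ∉ l := (List.nodup_cons.mp hl).1
    set S : List ℕ := (l.filter (fun s => r t s)).map f with hS
    have hex : ∃ n, n ≤ S.length ∧ n ∉ S := by
      by_contra h
      push_neg at h
      have hsub : Finset.range (S.length + 1) ⊆ S.toFinset := fun n hn =>
        List.mem_toFinset.mpr (h n (Nat.lt_succ_iff.mp (Finset.mem_range.mp hn)))
      have := (Finset.card_le_card hsub).trans S.toFinset_card_le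
      rw [Finset.card_range] at this
      omega
    obtain ⟨c, hc1, hc2⟩ := hex
    refine ⟨Function.update f t c, ?_, ?_⟩
    · intro u hu
      have hmono : ∀ p : β → Prop, ∀ _ : DecidablePred p,
          (l.filter p).length ≤ ((t :: l).filter p).length := by
        intro p _
        exact List.Sublist.length_le (List.Sublist.filter _ (List.sublist_cons_self t l))
      rcases List.mem_cons.mp hu with rfl | hu
      · rw [Function.update_self]
        calc c ≤ S.length := hc1
          _ = (l.filter (fun s => r u s)).length := by simp [hS]
          _ ≤ _ := hmono _ _
      · have hne : u ≠ t := fun h => htl (h ▸ hu)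
        rw [Function.update_of_ne hne]
        exact (hb u hu).trans (hmono _ _)
    · intro s hs u hu heq hr
      rcases List.mem_cons.mp hs with rfl | hs' <;> rcases List.mem_cons.mp hu with rfl | hu'
      · exact hirr _ hr
      · have hne : u ≠ s := fun h => htl (h ▸ hu')
        rw [Function.update_self, Function.update_of_ne hne] at heq
        exact hc2 (heq ▸ List.mem_map.mpr ⟨u, List.mem_filter.mpr ⟨hu', by simpa using hr⟩, rfl⟩)
      · have hne : s ≠ u := fun h => htl (h ▸ hs')
        rw [Function.update_self, Function.update_of_ne hne] at heq
        exact hc2 (heq ▸ List.mem_map.mpr ⟨s, List.mem_filter.mpr ⟨hs', by simpa using hsym _ _ hr⟩, rfl⟩)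
      · have h1 : s ≠ t := fun h => htl (h ▸ hs')
        have h2 : u ≠ t := fun h => htl (h ▸ hu')
        rw [Function.update_of_ne h1, Function.update_of_ne h2] at heq
        exact hp s hs' u hu' heq hr

lemma one_add_sum_le_prod {ι : Type*} (s : Finset ι) (g : ι → ℕ) (h : ∀ i ∈ s, 1 ≤ g i) :
    1 + ∑ i ∈ s, (g i - 1) ≤ ∏ i ∈ s, g i := by
  induction s using Finset.cons_induction with
  | empty => simp
  | cons a s ha ih =>
    rw [Finset.sum_cons, Finset.prod_cons]
    have h1 : 1 ≤ g a := h a (Finset.mem_cons_self a s)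
    have h2 := ih (fun i hi => h i (Finset.mem_cons.mpr (Or.inr hi)))
    have key : ∀ n P : ℕ, 1 ≤ n → 1 ≤ P → (n - 1) + P ≤ n * P := by
      intro n P hn hP
      cases n with
      | zero => omega
      | succ m =>
        have hm : m * 1 ≤ m * P := Nat.mul_le_mul_left m hP
        rw [Nat.succ_mul]
        omega
    have hP : 1 ≤ ∏ i ∈ s, g i := by omega
    have := key (g a) (∏ i ∈ s, g i) h1 hP
    omega
/-- Let `Σ = {φ_1 : X_1 → Y_1, …, φ_σ : X_σ → Y_σ}` be a finite FD set and `I` a nonempty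
instance.  Then `I` can be partitioned into at most `max_{t ∈ I} ∏_{i=1}^σ |[t.X_i]|`
classes (given by the fibers of a coloring `f`), each of which is consistent w.r.t. `Σ`:
no two tuples of `I` lying in the same class form a conflict. -/
theorem stmt6 {α V : Type*} [DecidableEq V] (σ : ℕ)
    (F : Fin σ → Finset α × Finset α) (I : Finset (α → V)) (hI : I.Nonempty) :
    ∃ f : (α → V) → ℕ,
      (∀ t ∈ I, f t < I.sup fun t =>
        ∏ i : Fin σ, (I.filter fun s => ∀ a ∈ (F i).1, s a = t a).card) ∧
      ∀ s ∈ I, ∀ t ∈ I, f s = f t →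
        ¬ ∃ i : Fin σ, IsPhiConflict (F i).1 (F i).2 s t := by
  classical
  set r : (α → V) → (α → V) → Prop :=
    fun s t => s ≠ t ∧ ∃ i : Fin σ, ∀ a ∈ (F i).1, s a = t a with hr
  have hsym : ∀ a b, r a b → r b a := by
    rintro a b ⟨hne, i, hi⟩
    exact ⟨hne.symm, i, fun x hx => (hi x hx).symm⟩
  have hirr : ∀ a, ¬ r a a := by rintro a ⟨hne, _⟩; exact hne rfl
  obtain ⟨f, hb, hp⟩ := greedy_color r hsym hirr I.toList I.nodup_toList
  refine ⟨f, ?_, ?_⟩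
  · intro t ht
    set g : (α → V) → ℕ :=
      fun u => ∏ i : Fin σ, (I.filter fun s => ∀ a ∈ (F i).1, s a = u a).card with hg
    set c : Fin σ → ℕ :=
      fun i => (I.filter fun s => ∀ a ∈ (F i).1, s a = t a).card with hc
    have hlen : (I.toList.filter (fun s => r t s)).length = (I.filter (fun s => r t s)).card := by
      rw [show (I.filter (fun s => r t s)).card
            = Multiset.card (Multiset.filter (fun s => r t s) I.val) from rfl,
          ← Finset.coe_toList I, Multiset.filter_coe, Multiset.coe_card]
    have h1 : f t ≤ (I.filter (fun s => r t s)).card := hlen ▸ hb t (Finset.mem_toList.mpr ht)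
    have hsub : I.filter (fun s => r t s) ⊆
        (Finset.univ : Finset (Fin σ)).biUnion
          (fun i => (I.filter fun s => ∀ a ∈ (F i).1, s a = t a).erase t) := by
      intro s hsmem
      rw [Finset.mem_filter] at hsmem
      obtain ⟨hsI, hne, i, hi⟩ := hsmem
      exact Finset.mem_biUnion.mpr ⟨i, Finset.mem_univ i,
        Finset.mem_erase.mpr ⟨fun h => hne (h ▸ rfl), Finset.mem_filter.mpr ⟨hsI, fun a ha => (hi a ha).symm⟩⟩⟩
    have htmem : ∀ i : Fin σ, t ∈ I.filter fun s => ∀ a ∈ (F i).1, s a = t a :=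
      fun i => Finset.mem_filter.mpr ⟨ht, fun _ _ => rfl⟩
    have h2 : (I.filter (fun s => r t s)).card ≤ ∑ i : Fin σ, (c i - 1) := by
      calc _ ≤ _ := Finset.card_le_card hsub
        _ ≤ ∑ i : Fin σ, ((I.filter fun s => ∀ a ∈ (F i).1, s a = t a).erase t).card :=
          Finset.card_biUnion_le
        _ = _ := by
          refine Finset.sum_congr rfl fun i _ => ?_
          rw [Finset.card_erase_of_mem (htmem i)]
    have h3 : 1 + ∑ i : Fin σ, (c i - 1) ≤ ∏ i : Fin σ, c i :=
      one_add_sum_le_prod Finset.univ c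
        (fun i _ => Finset.card_pos.mpr ⟨t, htmem i⟩)
    have hgt : g t = ∏ i : Fin σ, c i := rfl
    have h4 : g t ≤ I.sup g := Finset.le_sup (f := g) ht
    omega
  · rintro s hs t ht heq ⟨i, hagree, hdiff⟩
    have hne : s ≠ t := by
      rintro rfl
      obtain ⟨a, _, ha⟩ := hdiff
      exact ha rfl
    exact hp s (Finset.mem_toList.mpr hs) t (Finset.mem_toList.mpr ht) heq ⟨hne, i, hagree⟩
end

section
/- Let I be an instance, Σ a finite FD set, and x : I → ℚ a half-integral feasible fractional solution, i.e., x_t ∈ {0, 1/2, 1} for every t ∈ I and x_s + x_t ≥ 1 whenever s, t ∈ I form a conflict. Suppose I is partitioned into k ≥ 1 classes P_1, …, P_k, each consistent with respect to Σ. Then there exists a consistent subset J ⊆ I with dist(J, I) ≤ (2 − 2/k) · Σ_{t ∈ I} x_t. In particular, if moreover Σ_{t ∈ I} x_t ≤ opt(I), then dist(J, I) ≤ (2 − 2/k) · opt(I). -/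
/-!
Round a half-integral solution `x` as follows: keep every tuple with `x t = 0`, and among the
tuples with `x t = 1/2` keep those of a class `P i` containing the largest number of them. By
feasibility, a conflict needs `x s + x t ≥ 1`, so it can only involve a tuple with `x = 1` (all
dropped) or two half-tuples (kept ones share a consistent class). The maximal class keeps at
least a `1/k`-fraction of the half-tuples, so at most `(1 - 1/k)` of them are dropped, which is
`(2 - 2/k)` times their weight `1/2`; each dropped tuple with `x = 1` costs `1 ≤ 2 - 2/k` when
`k ≥ 2`. When `k ≤ 1`, `I` itself is consistent.
-/

open Finset

theorem Consistent.mono {α V : Type*} {FDs : Finset (Finset α × Finset α)}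
    {J J' : Finset (α → V)} (hJJ' : J ⊆ J') (hJ' : Consistent FDs J') : Consistent FDs J :=
  fun s hs t ht => hJ' s (hJJ' hs) t (hJJ' ht)

theorem Consistent.union_of_feasible {α V : Type*} [DecidableEq (α → V)]
    {FDs : Finset (Finset α × Finset α)} {I S C : Finset (α → V)} {x : (α → V) → ℚ}
    (hC : Consistent FDs C)
    (hfeas : ∀ s ∈ I, ∀ t ∈ I, IsConflict FDs s t → 1 ≤ x s + x t)
    (hSI : S ⊆ I) (hCI : C ⊆ I) (hxS : ∀ t ∈ S, x t < 1 / 2) (hxC : ∀ t ∈ C, x t ≤ 1 / 2) :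
    Consistent FDs (S ∪ C) := by
  intro s hs t ht hst
  have hsum := hfeas s (union_subset hSI hCI hs) t (union_subset hSI hCI ht) hst
  rcases mem_union.1 hs with hs | hs <;> rcases mem_union.1 ht with ht | ht
  · linarith [hxS s hs, hxS t ht]
  · linarith [hxS s hs, hxC t ht]
  · linarith [hxC s hs, hxS t ht]
  · exact hC s hs t ht hst

theorem consistent_of_subsingleton_cover {α V ι : Type*} [Subsingleton ι]
    {FDs : Finset (Finset α × Finset α)} {I : Finset (α → V)} {P : ι → Finset (α → V)}
    (hcover : ∀ t ∈ I, ∃ i, t ∈ P i) (hcons : ∀ i, Consistent FDs (P i)) :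
    Consistent FDs I := by
  intro s hs t ht
  obtain ⟨i, hsi⟩ := hcover s hs
  obtain ⟨j, htj⟩ := hcover t ht
  exact hcons j s (Subsingleton.elim i j ▸ hsi) t htj

theorem Finset.exists_card_le_mul_card_inter {ι β : Type*} [Fintype ι] [Nonempty ι]
    [DecidableEq β] {H : Finset β} {P : ι → Finset β} (hcover : ∀ t ∈ H, ∃ i, t ∈ P i) :
    ∃ i, #H ≤ Fintype.card ι * #(H ∩ P i) := by
  have hH : #H ≤ ∑ i, #(H ∩ P i) := by
    refine (card_le_card fun t ht => ?_).trans card_biUnion_le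
    obtain ⟨i, hi⟩ := hcover t ht
    exact mem_biUnion.2 ⟨i, mem_univ i, mem_inter.2 ⟨ht, hi⟩⟩
  obtain ⟨i, -, hi⟩ := exists_le_of_sum_le (f := fun _ => #H)
    (g := fun i => Fintype.card ι * #(H ∩ P i)) univ_nonempty
    (by simpa [← mul_sum] using Nat.mul_le_mul_left (Fintype.card ι) hH)
  exact ⟨i, hi⟩

section HalfIntegral

variable {β : Type*} {I : Finset β} {x : β → ℚ}

theorem card_eq_of_halfIntegral (hx : ∀ t ∈ I, x t = 0 ∨ x t = 1 / 2 ∨ x t = 1) :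
    #I = #{t ∈ I | x t = 0} + #{t ∈ I | x t = 1 / 2} + #{t ∈ I | x t = 1} := by
  rw [card_filter, card_filter, card_filter, ← sum_add_distrib, ← sum_add_distrib,
    card_eq_sum_ones]
  refine sum_congr rfl fun t ht => ?_
  rcases hx t ht with h | h | h <;> norm_num [h]

theorem sum_eq_of_halfIntegral (hx : ∀ t ∈ I, x t = 0 ∨ x t = 1 / 2 ∨ x t = 1) :
    ∑ t ∈ I, x t = (#{t ∈ I | x t = 1 / 2} : ℚ) / 2 + #{t ∈ I | x t = 1} := by
  rw [natCast_card_filter, natCast_card_filter, sum_div, ← sum_add_distrib]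
  refine sum_congr rfl fun t ht => ?_
  rcases hx t ht with h | h | h <;> norm_num [h]

end HalfIntegral

theorem exists_consistent_card_sub_le_of_halfIntegral {α V ι : Type*} [Fintype ι]
    {FDs : Finset (Finset α × Finset α)} {I : Finset (α → V)} {x : (α → V) → ℚ}
    (hx : ∀ t ∈ I, x t = 0 ∨ x t = 1 / 2 ∨ x t = 1)
    (hfeas : ∀ s ∈ I, ∀ t ∈ I, IsConflict FDs s t → 1 ≤ x s + x t)
    (hι : 2 ≤ Fintype.card ι) {P : ι → Finset (α → V)}
    (hcover : ∀ t ∈ I, ∃ i, t ∈ P i) (hcons : ∀ i, Consistent FDs (P i)) :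
    ∃ J ⊆ I, Consistent FDs J ∧
      (#I : ℚ) - #J ≤ (2 - 2 / Fintype.card ι) * ∑ t ∈ I, x t := by
  classical
  set k := Fintype.card ι
  set Z := {t ∈ I | x t = 0}
  set H := {t ∈ I | x t = 1 / 2}
  have : Nonempty ι := Fintype.card_pos_iff.1 (by omega)
  obtain ⟨i, hi⟩ := exists_card_le_mul_card_inter (H := H) fun t ht =>
    hcover t (mem_filter.1 ht).1
  have hHI : H ∩ P i ⊆ I := inter_subset_left.trans (filter_subset _ _)
  have hJ : Consistent FDs (Z ∪ H ∩ P i) :=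
    ((hcons i).mono inter_subset_right).union_of_feasible hfeas (filter_subset _ _) hHI
      (fun t ht => by rw [(mem_filter.1 ht).2]; norm_num)
      (fun t ht => (mem_filter.1 (mem_inter.1 ht).1).2.le)
  have hZH : Disjoint Z (H ∩ P i) :=
    (disjoint_filter.2 fun t _ h => by norm_num [h]).mono_right inter_subset_left
  refine ⟨Z ∪ H ∩ P i, union_subset (filter_subset _ _) hHI, hJ, ?_⟩
  set O := {t ∈ I | x t = 1}
  have hI : (#I : ℚ) = #Z + #H + #O := by exact_mod_cast card_eq_of_halfIntegral hx
  have hk : (2 : ℚ) / k ≤ 1 := by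
    rw [div_le_one₀ (by positivity)]
    exact_mod_cast hι
  have hm : (#H : ℚ) / k ≤ #(H ∩ P i) := by
    rw [div_le_iff₀ (by positivity)]
    exact_mod_cast (mul_comm k _ ▸ hi)
  have hO : (2 / k) * (#O : ℚ) ≤ #O := mul_le_of_le_one_left (Nat.cast_nonneg _) hk
  rw [card_union_of_disjoint hZH, hI, sum_eq_of_halfIntegral hx]
  push_cast
  linarith [show (2 - 2 / k) * ((#H : ℚ) / 2 + #O) = #H - #H / k + 2 * #O - 2 / k * #O by ring]

theorem stmt8_general {α V : Type*} (FDs : Finset (Finset α × Finset α))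
    (I : Finset (α → V)) (x : (α → V) → ℚ)
    (hx : ∀ t ∈ I, x t = 0 ∨ x t = 1 / 2 ∨ x t = 1)
    (hfeas : ∀ s ∈ I, ∀ t ∈ I, IsConflict FDs s t → 1 ≤ x s + x t)
    (k : ℕ) (P : Fin k → Finset (α → V))
    (hPcover : ∀ t ∈ I, ∃! i, t ∈ P i)
    (hPcons : ∀ i, Consistent FDs (P i)) :
    ∃ J ⊆ I, Consistent FDs J ∧
      ((I.card : ℚ) - J.card ≤ (2 - 2 / k) * ∑ t ∈ I, x t ∧
        ((∑ t ∈ I, x t) ≤ (opt FDs I : ℚ) →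
          (I.card : ℚ) - J.card ≤ (2 - 2 / k) * (opt FDs I : ℚ))) := by
  have hcoef : (0 : ℚ) ≤ 2 - 2 / k := by
    rcases Nat.eq_zero_or_pos k with rfl | hk
    · norm_num
    · exact sub_nonneg.2 (div_le_self zero_le_two (by exact_mod_cast hk))
  suffices ∃ J ⊆ I, Consistent FDs J ∧ (I.card : ℚ) - J.card ≤ (2 - 2 / k) * ∑ t ∈ I, x t by
    obtain ⟨J, hJI, hJ, hdist⟩ := this
    exact ⟨J, hJI, hJ, hdist, fun hopt => hdist.trans (mul_le_mul_of_nonneg_left hopt hcoef)⟩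
  have hcover : ∀ t ∈ I, ∃ i, t ∈ P i := fun t ht => (hPcover t ht).exists
  rcases le_or_gt k 1 with hk | hk
  · have : Subsingleton (Fin k) := Fin.subsingleton_iff_le_one.2 hk
    have hx0 : 0 ≤ ∑ t ∈ I, x t := sum_nonneg fun t ht => by
      rcases hx t ht with h | h | h <;> norm_num [h]
    exact ⟨I, subset_rfl, consistent_of_subsingleton_cover hcover hPcons,
      by simpa using mul_nonneg hcoef hx0⟩
  · simpa using exists_consistent_card_sub_le_of_halfIntegral hx hfeas
      (by simpa using Nat.succ_le_of_lt hk) hcover hPcons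

/-- Rounding a half-integral feasible fractional solution `x` along a partition of `I`
into `k ≥ 1` consistent classes `P_1, …, P_k` yields a consistent subset `J ⊆ I` with
`dist(J, I) ≤ (2 − 2/k) · Σ_{t ∈ I} x_t`; in particular, if moreover
`Σ_{t ∈ I} x_t ≤ opt(I)`, then `dist(J, I) ≤ (2 − 2/k) · opt(I)`. -/
theorem stmt8 {α V : Type*} [DecidableEq V] (FDs : Finset (Finset α × Finset α))
    (I : Finset (α → V)) (x : (α → V) → ℚ)
    (hx : ∀ t ∈ I, x t = 0 ∨ x t = 1 / 2 ∨ x t = 1)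
    (hfeas : ∀ s ∈ I, ∀ t ∈ I, IsConflict FDs s t → 1 ≤ x s + x t)
    (k : ℕ) (hk : 1 ≤ k) (P : Fin k → Finset (α → V))
    (hPsub : ∀ i, P i ⊆ I)
    (hPcover : ∀ t ∈ I, ∃! i, t ∈ P i)
    (hPcons : ∀ i, Consistent FDs (P i)) :
    ∃ J ⊆ I, Consistent FDs J ∧
      ((I.card : ℚ) - J.card ≤ (2 - 2 / k) * ∑ t ∈ I, x t ∧
        ((∑ t ∈ I, x t) ≤ (opt FDs I : ℚ) →
          (I.card : ℚ) - J.card ≤ (2 - 2 / k) * (opt FDs I : ℚ))) :=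
  stmt8_general FDs I x hx hfeas k P hPcover hPcons
end

section
/- Let I be an instance and Σ a finite FD set. If T_1, …, T_l are pairwise disjoint triads in I and J ⊆ I is consistent with respect to Σ, then J contains at most one tuple of each T_i; consequently |(I ∖ J) ∩ (T_1 ∪ … ∪ T_l)| ≥ 2l, and opt(I) ≥ 2l + opt(I ∖ (T_1 ∪ … ∪ T_l)). -/
section Aux
variable {α V : Type*} [DecidableEq V] [DecidableEq (α → V)]

lemma aux_card_inter_le_one (FDs : Finset (Finset α × Finset α))
    (Ti : Finset (α → V)) (hTconf : ∀ s ∈ Ti, ∀ t ∈ Ti, s ≠ t → IsConflict FDs s t)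
    (K : Finset (α → V)) (hKc : Consistent FDs K) : (K ∩ Ti).card ≤ 1 := by
  apply Finset.card_le_one.2
  intro a ha b hb
  simp only [Finset.mem_inter] at ha hb
  by_contra hne
  exact hKc a ha.1 b hb.1 (hTconf a ha.2 b hb.2 hne)

lemma aux_key (FDs : Finset (Finset α × Finset α)) (I : Finset (α → V))
    (l : ℕ) (T : Fin l → Finset (α → V))
    (hTsub : ∀ i, T i ⊆ I) (hTcard : ∀ i, (T i).card = 3)
    (hTconf : ∀ i, ∀ s ∈ T i, ∀ t ∈ T i, s ≠ t → IsConflict FDs s t)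
    (hdisj : ∀ i j, i ≠ j → Disjoint (T i) (T j))
    (K : Finset (α → V)) (hK : K ⊆ I) (hKc : Consistent FDs K) :
    2 * l ≤ ((I \ K) ∩ Finset.univ.biUnion T).card := by
  have hUeq : (I \ K) ∩ Finset.univ.biUnion T
      = Finset.univ.biUnion (fun i => (I \ K) ∩ T i) := by
    ext x; simp only [Finset.mem_inter, Finset.mem_sdiff, Finset.mem_biUnion, Finset.mem_univ, true_and]; tauto
  rw [hUeq, Finset.card_biUnion]
  · have h2 : ∀ i, 2 ≤ ((I \ K) ∩ T i).card := by
      intro i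
      have hsub : T i \ K ⊆ (I \ K) ∩ T i := by
        intro x hx
        simp only [Finset.mem_sdiff, Finset.mem_inter] at hx ⊢
        exact ⟨⟨hTsub i hx.1, hx.2⟩, hx.1⟩
      have h1 : (K ∩ T i).card ≤ 1 :=
        aux_card_inter_le_one FDs (T i) (hTconf i) K hKc
      have h3 := hTcard i
      have := Finset.card_inter_add_card_sdiff (T i) K
      have hKT : (T i ∩ K).card ≤ 1 := by rwa [Finset.inter_comm]
      have : 2 ≤ (T i \ K).card := by omega
      exact le_trans this (Finset.card_le_card hsub)
    calc 2 * l = ∑ _i : Fin l, 2 := by simp [mul_comm]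
      _ ≤ ∑ i : Fin l, ((I \ K) ∩ T i).card := Finset.sum_le_sum (fun i _ => h2 i)
  · intro i _ j _ hij
    exact Finset.disjoint_of_subset_left Finset.inter_subset_right
      (Finset.disjoint_of_subset_right Finset.inter_subset_right (hdisj i j hij))

end Aux

/-- If `T_1, …, T_l` are pairwise disjoint triads in `I` (three tuples of `I` pairwise in
conflict) and `J ⊆ I` is consistent w.r.t. `Σ`, then `J` contains at most one tuple of
each `T_i`; consequently `|(I ∖ J) ∩ (T_1 ∪ … ∪ T_l)| ≥ 2l`, and
`opt(I) ≥ 2l + opt(I ∖ (T_1 ∪ … ∪ T_l))`. -/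

theorem stmt9 {α V : Type*} [DecidableEq V] [DecidableEq (α → V)]
    (FDs : Finset (Finset α × Finset α)) (I : Finset (α → V))
    (l : ℕ) (T : Fin l → Finset (α → V))
    (hTsub : ∀ i, T i ⊆ I) (hTcard : ∀ i, (T i).card = 3)
    (hTconf : ∀ i, ∀ s ∈ T i, ∀ t ∈ T i, s ≠ t → IsConflict FDs s t)
    (hdisj : ∀ i j, i ≠ j → Disjoint (T i) (T j))
    (J : Finset (α → V)) (hJ : J ⊆ I) (hJc : Consistent FDs J) :
    (∀ i, (J ∩ T i).card ≤ 1) ∧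
      2 * l ≤ ((I \ J) ∩ Finset.univ.biUnion T).card ∧
      2 * l + opt FDs (I \ Finset.univ.biUnion T) ≤ opt FDs I := by
  set U := Finset.univ.biUnion T with hU
  refine ⟨fun i => aux_card_inter_le_one FDs (T i) (hTconf i) J hJc, ?_, ?_⟩
  · exact aux_key FDs I l T hTsub hTcard hTconf hdisj J hJ hJc
  · have hne : {d : ℕ | ∃ J ⊆ I, Consistent FDs J ∧ d = I.card - J.card}.Nonempty :=
      ⟨I.card, ∅, Finset.empty_subset I, fun s hs => by simp at hs, by simp⟩
    obtain ⟨K, hK, hKc, hKd⟩ := Nat.sInf_mem hne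
    have hoptI : opt FDs I = (I \ K).card := by
      have h0 : opt FDs I = I.card - K.card := hKd
      rw [h0, Finset.card_sdiff_of_subset hK]
    have hK'sub : K \ U ⊆ I \ U := Finset.sdiff_subset_sdiff hK le_rfl
    have hK'c : Consistent FDs (K \ U) := fun s hs t ht =>
      hKc s (Finset.sdiff_subset hs) t (Finset.sdiff_subset ht)
    have hoptle : opt FDs (I \ U) ≤ ((I \ U) \ K).card := by
      have heq : ((I \ U) \ (K \ U)) = ((I \ U) \ K) := by
        ext x; simp only [Finset.mem_sdiff]; tauto
      have h := Nat.sInf_le (s := {d : ℕ | ∃ J ⊆ I \ U,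
        Consistent FDs J ∧ d = (I \ U).card - J.card})
        (m := (I \ U).card - (K \ U).card) ⟨K \ U, hK'sub, hK'c, rfl⟩
      rw [← Finset.card_sdiff_of_subset hK'sub, heq] at h
      exact h
    have h2l : 2 * l ≤ ((I \ K) ∩ U).card :=
      aux_key FDs I l T hTsub hTcard hTconf hdisj K hK hKc
    have hsplit : ((I \ K) ∩ U).card + ((I \ U) \ K).card = (I \ K).card := by
      have heq : (I \ K) \ U = (I \ U) \ K := by
        ext x; simp only [Finset.mem_sdiff]; tauto
      rw [← heq]
      exact Finset.card_inter_add_card_sdiff (I \ K) U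
    rw [hoptI]
    omega
end

section
/- Let φ : X → Y be an FD and I an instance. If I contains no three tuples that pairwise form φ-conflicts, then I can be partitioned into two classes, each of which contains no φ-conflict. -/
/- Within one class of tuples agreeing on `X`, two tuples conflict iff they lie in different
classes of "agreeing on `Y`". A triangle-free class therefore meets at most two `Y`-classes, and
colouring each tuple by whether it agrees on `Y` with a fixed representative of its `X`-class
separates every conflicting pair. -/

theorem exists_bool_coloring_of_no_triangle {β κ μ : Type*} (g : β → κ) (h : β → μ) (S : Set β)
    (hS : ¬ ∃ s ∈ S, ∃ t ∈ S, ∃ u ∈ S, (g s = g t ∧ h s ≠ h t) ∧ (g s = g u ∧ h s ≠ h u) ∧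
      (g t = g u ∧ h t ≠ h u)) :
    ∃ f : β → Bool, ∀ s ∈ S, ∀ t ∈ S, f s = f t → ¬ (g s = g t ∧ h s ≠ h t) := by
  classical
  obtain _ | _ := isEmpty_or_nonempty β
  · exact ⟨fun _ => true, fun s => isEmptyElim s⟩
  let rep : κ → β := fun k => Classical.epsilon fun u => u ∈ S ∧ g u = k
  refine ⟨fun s => decide (h s = h (rep (g s))), ?_⟩
  rintro s hs t ht hf ⟨hgst, hhst⟩
  obtain ⟨huS, hgu⟩ : rep (g s) ∈ S ∧ g (rep (g s)) = g s :=
    Classical.epsilon_spec (p := fun u => u ∈ S ∧ g u = g s) ⟨s, hs, rfl⟩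
  set u := rep (g s)
  simp only [← hgst, decide_eq_decide] at hf
  by_cases hsu : h s = h u
  · exact hhst (hsu.trans (hf.mp hsu).symm)
  · exact hS ⟨s, hs, t, ht, u, huS, ⟨hgst, hhst⟩, ⟨hgu.symm, hsu⟩,
      ⟨hgst ▸ hgu.symm, mt hf.mpr hsu⟩⟩

theorem Finset.restrict_eq_restrict_iff {ι β : Type*} {X : Finset ι} {s t : ι → β} :
    X.restrict s = X.restrict t ↔ ∀ a ∈ X, s a = t a := by
  simp [funext_iff]

theorem isPhiConflict_iff_restrict {α V : Type*} {X Y : Finset α} {s t : α → V} :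
    IsPhiConflict X Y s t ↔ X.restrict s = X.restrict t ∧ Y.restrict s ≠ Y.restrict t := by
  simp only [IsPhiConflict, Ne, Finset.restrict_eq_restrict_iff, not_forall, exists_prop]

/-- Let `φ : X → Y` be an FD and `I` an instance.  If `I` contains no three tuples that
pairwise form `φ`-conflicts, then `I` can be partitioned into two classes (the fibers of
a two-valued coloring `f`), each of which contains no `φ`-conflict. -/
theorem stmt10 {α V : Type*} (X Y : Finset α) (I : Finset (α → V))
    (htriad : ¬ ∃ s ∈ I, ∃ t ∈ I, ∃ u ∈ I,
      IsPhiConflict X Y s t ∧ IsPhiConflict X Y s u ∧ IsPhiConflict X Y t u) :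
    ∃ f : (α → V) → Bool, ∀ s ∈ I, ∀ t ∈ I, f s = f t → ¬ IsPhiConflict X Y s t := by
  simp only [isPhiConflict_iff_restrict] at htriad ⊢
  exact exists_bool_coloring_of_no_triangle X.restrict Y.restrict (I : Set (α → V)) htriad
end

section
/- Let Σ = {φ_1, …, φ_σ} be a finite FD set and I an instance. If for every i ∈ {1, …, σ} the instance I contains no three tuples that pairwise form φ_i-conflicts, then I can be partitioned into at most 2^σ classes, each of which is consistent with respect to Σ. -/
section Coloring

variable {α V : Type*}

/-- A tuple of `I` that agrees with `t` on `X`, whenever one exists. Since it depends on `t` only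
through the predicate it is chosen by, tuples agreeing on `X` get the same one. -/
noncomputable def classRep (I : Finset (α → V)) (X : Finset α) (t : α → V) : α → V :=
  @Classical.epsilon _ ⟨t⟩ fun u => u ∈ I ∧ ∀ a ∈ X, u a = t a

variable {I : Finset (α → V)} {X Y : Finset α} {s t : α → V}

lemma classRep_spec (ht : t ∈ I) : classRep I X t ∈ I ∧ ∀ a ∈ X, classRep I X t a = t a :=
  Classical.epsilon_spec (p := fun u => u ∈ I ∧ ∀ a ∈ X, u a = t a) ⟨t, ht, fun _ _ => rfl⟩

lemma classRep_congr (h : ∀ a ∈ X, s a = t a) : classRep I X s = classRep I X t := by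
  have hpred : (fun u : α → V => u ∈ I ∧ ∀ a ∈ X, u a = s a) =
      fun u => u ∈ I ∧ ∀ a ∈ X, u a = t a := by
    funext u
    exact propext <| and_congr_right fun _ => forall₂_congr fun a ha => by rw [h a ha]
  unfold classRep
  rw [hpred]

lemma isPhiConflict_iff_of_agree (h : ∀ a ∈ X, s a = t a) :
    IsPhiConflict X Y s t ↔ ¬ ∀ a ∈ Y, s a = t a := by
  simp only [IsPhiConflict, not_forall, exists_prop]
  exact and_iff_right h

/-- Within a class of agreement on `X`, conflicts are exactly the pairs with different
`Y`-projections, so without conflict triangles at most two projections occur; colouring each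
tuple by whether it shares the projection of its class representative separates them. -/
lemma exists_bool_coloring_not_isPhiConflict
    (htriad : ¬ ∃ s ∈ I, ∃ t ∈ I, ∃ u ∈ I,
      IsPhiConflict X Y s t ∧ IsPhiConflict X Y s u ∧ IsPhiConflict X Y t u) :
    ∃ c : (α → V) → Bool, ∀ s ∈ I, ∀ t ∈ I, c s = c t → ¬ IsPhiConflict X Y s t := by
  classical
  refine ⟨fun t => decide (∀ a ∈ Y, classRep I X t a = t a), ?_⟩
  rintro s hs t ht hc hst
  obtain ⟨hrI, hrs⟩ := classRep_spec (X := X) hs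
  have hrt : classRep I X t = classRep I X s := classRep_congr fun a ha => (hst.1 a ha).symm
  have hc : (∀ a ∈ Y, classRep I X s a = s a) ↔ ∀ a ∈ Y, classRep I X s a = t a := by
    simpa only [hrt, decide_eq_decide] using hc
  obtain ⟨a, haY, hne⟩ := hst.2
  by_cases hsY : ∀ a ∈ Y, classRep I X s a = s a
  · exact hne ((hsY a haY).symm.trans (hc.1 hsY a haY))
  · have hrt' : ∀ a ∈ X, classRep I X s a = t a := fun a ha => (hrs a ha).trans (hst.1 a ha)
    exact htriad ⟨_, hrI, s, hs, t, ht, (isPhiConflict_iff_of_agree hrs).2 hsY,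
      (isPhiConflict_iff_of_agree hrt').2 (mt hc.2 hsY), ⟨hst.1, a, haY, hne⟩⟩

end Coloring

lemma exists_lt_two_pow_of_bool_colorings {β : Type*} {σ : ℕ} (c : Fin σ → β → Bool) :
    ∃ f : β → ℕ, (∀ t, f t < 2 ^ σ) ∧ ∀ s t, f s = f t → ∀ i, c i s = c i t := by
  refine ⟨fun t => finFunctionFinEquiv fun i => finTwoEquiv.symm (c i t),
    fun t => Fin.isLt _, fun s t hst i => ?_⟩
  have h := finFunctionFinEquiv.injective (Fin.val_injective hst)
  exact finTwoEquiv.symm.injective (congrFun h i)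

/-- Let `Σ = {φ_1, …, φ_σ}` be a finite FD set and `I` an instance.  If for every `i`
the instance `I` contains no three tuples pairwise forming `φ_i`-conflicts, then `I` can
be partitioned into at most `2^σ` classes (the fibers of a coloring `f` with values
`< 2^σ` on `I`), each of which is consistent w.r.t. `Σ`. -/
theorem stmt11 {α V : Type*} (σ : ℕ) (F : Fin σ → Finset α × Finset α)
    (I : Finset (α → V))
    (htriad : ∀ i : Fin σ, ¬ ∃ s ∈ I, ∃ t ∈ I, ∃ u ∈ I,
      IsPhiConflict (F i).1 (F i).2 s t ∧ IsPhiConflict (F i).1 (F i).2 s u ∧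
        IsPhiConflict (F i).1 (F i).2 t u) :
    ∃ f : (α → V) → ℕ, (∀ t ∈ I, f t < 2 ^ σ) ∧
      ∀ s ∈ I, ∀ t ∈ I, f s = f t →
        ¬ ∃ i : Fin σ, IsPhiConflict (F i).1 (F i).2 s t := by
  choose c hc using fun i => exists_bool_coloring_not_isPhiConflict (htriad i)
  obtain ⟨f, hf_lt, hf_eq⟩ := exists_lt_two_pow_of_bool_colorings c
  exact ⟨f, fun t _ => hf_lt t, fun s hs t ht hst ⟨i, hi⟩ => hc i s hs t ht (hf_eq s t hst i) hi⟩
end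

section
/- Let I be an instance, Σ a finite FD set, Δ = T_1 ∪ … ∪ T_l a union of pairwise disjoint triads of I, and c ≥ 3/2 a real number. If J ⊆ I ∖ Δ is consistent with respect to Σ and dist(J, I ∖ Δ) ≤ c · opt(I ∖ Δ), then J is a consistent subset of I and dist(J, I) ≤ c · opt(I). -/
/-- Let `Δ = T_1 ∪ … ∪ T_l` be a union of pairwise disjoint triads of `I` and `c ≥ 3/2`.
If `J ⊆ I ∖ Δ` is consistent w.r.t. `Σ` and `dist(J, I ∖ Δ) ≤ c · opt(I ∖ Δ)`, then `J`
is a consistent subset of `I` and `dist(J, I) ≤ c · opt(I)`. -/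
theorem stmt12 {α V : Type*} [DecidableEq V] [DecidableEq (α → V)]
    (FDs : Finset (Finset α × Finset α)) (I : Finset (α → V))
    (l : ℕ) (T : Fin l → Finset (α → V))
    (hTsub : ∀ i, T i ⊆ I) (hTcard : ∀ i, (T i).card = 3)
    (hTconf : ∀ i, ∀ s ∈ T i, ∀ t ∈ T i, s ≠ t → IsConflict FDs s t)
    (hdisj : ∀ i j, i ≠ j → Disjoint (T i) (T j))
    (Δ : Finset (α → V)) (hΔ : Δ = Finset.univ.biUnion T)
    (c : ℝ) (hc : 3 / 2 ≤ c)
    (J : Finset (α → V)) (hJ : J ⊆ I \ Δ) (hJc : Consistent FDs J)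
    (hdist : ((I \ Δ).card : ℝ) - J.card ≤ c * opt FDs (I \ Δ)) :
    J ⊆ I ∧ (I.card : ℝ) - J.card ≤ c * opt FDs I := by

  -- Basic facts
  have hΔsub : Δ ⊆ I := by
    subst hΔ
    intro x hx
    rcases Finset.mem_biUnion.mp hx with ⟨i, _, hxi⟩
    exact hTsub i hxi
  have hΔcard : Δ.card = 3 * l := by
    subst hΔ
    rw [Finset.card_biUnion (fun i _ j _ hij => hdisj i j hij)]
    simp [hTcard, mul_comm]
  have hIcard : I.card = (I \ Δ).card + 3 * l := by
    rw [Finset.card_sdiff_of_subset hΔsub]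
    have := Finset.card_le_card hΔsub
    omega
  -- opt is attained
  have hne : {d : ℕ | ∃ K ⊆ I, Consistent FDs K ∧ d = I.card - K.card}.Nonempty := by
    exact ⟨I.card, ∅, Finset.empty_subset _, fun s hs => by simp at hs, by simp⟩
  obtain ⟨K, hKsub, hKcons, hKeq⟩ := Nat.sInf_mem hne
  -- K ∩ Δ has card ≤ l
  have hKΔ : (K ∩ Δ).card ≤ l := by
    subst hΔ
    have : K ∩ Finset.univ.biUnion T = Finset.univ.biUnion (fun i => K ∩ T i) := by
      rw [Finset.inter_biUnion]
    rw [this]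
    calc (Finset.univ.biUnion fun i => K ∩ T i).card
        ≤ ∑ i, (K ∩ T i).card := Finset.card_biUnion_le
      _ ≤ ∑ _i : Fin l, 1 := by
          apply Finset.sum_le_sum
          intro i _
          apply Finset.card_le_one.mpr
          intro a ha b hb
          by_contra hab
          exact hKcons a (Finset.mem_of_mem_inter_left ha)
            b (Finset.mem_of_mem_inter_left hb)
            (hTconf i a (Finset.mem_of_mem_inter_right ha)
              b (Finset.mem_of_mem_inter_right hb) hab)
      _ = l := by simp
  have hKsplit : K.card ≤ (K \ Δ).card + l := by
    have := Finset.card_sdiff_add_card_inter K Δ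
    omega
  have hKd_sub : K \ Δ ⊆ I \ Δ := Finset.sdiff_subset_sdiff hKsub (le_refl Δ)
  have hKd_cons : Consistent FDs (K \ Δ) := fun s hs t ht =>
    hKcons s (Finset.mem_sdiff.mp hs).1 t (Finset.mem_sdiff.mp ht).1
  have hopt_le : opt FDs (I \ Δ) ≤ (I \ Δ).card - (K \ Δ).card :=
    Nat.sInf_le ⟨K \ Δ, hKd_sub, hKd_cons, rfl⟩
  have hKdle : (K \ Δ).card ≤ (I \ Δ).card := Finset.card_le_card hKd_sub
  have hKle : K.card ≤ I.card := Finset.card_le_card hKsub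
  have hoptI : opt FDs I = I.card - K.card := hKeq
  have hkey : opt FDs (I \ Δ) + 2 * l ≤ opt FDs I := by
    rw [hoptI]
    omega
  refine ⟨hJ.trans (Finset.sdiff_subset), ?_⟩
  have hkeyR : (opt FDs (I \ Δ) : ℝ) + 2 * l ≤ opt FDs I := by
    exact_mod_cast hkey
  have h0c : (0:ℝ) ≤ c := by linarith
  have hIR : (I.card : ℝ) = ((I \ Δ).card : ℝ) + 3 * l := by exact_mod_cast hIcard
  have h3l : (3:ℝ) * l ≤ c * (2 * l) := by
    have : (0:ℝ) ≤ l := Nat.cast_nonneg l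
    nlinarith
  calc (I.card : ℝ) - J.card = (((I \ Δ).card : ℝ) - J.card) + 3 * l := by
        rw [hIR]; ring
    _ ≤ c * opt FDs (I \ Δ) + c * (2 * l) := by linarith
    _ = c * (opt FDs (I \ Δ) + 2 * l) := by ring
    _ ≤ c * opt FDs I := by nlinarith [hkeyR]
end

section
/- Let I be an instance, Σ a finite FD set, and G the conflict graph of I, i.e., the simple graph whose vertices are the tuples of I and whose edges are the pairs of tuples forming a conflict. Let M be a maximal matching of G (a matching such that every edge of G shares an endpoint with some edge of M), and let V(M) be the set of endpoints of the edges of M. Then S = I ∖ V(M) is consistent with respect to Σ and dist(S, I) = 2|M| ≤ 2 · opt(I). -/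
/-- Let `G` be the conflict graph of `I` (vertices are the tuples of `I`, edges the pairs
of tuples forming a conflict) and `M` a maximal matching of `G`, represented as a finite
set of edges `(e.1, e.2)`: the endpoints of each edge lie in `I` and form a conflict,
distinct edges of `M` share no endpoint, and every edge of `G` shares an endpoint with
some edge of `M`.  Let `V(M)` be the set of endpoints of the edges of `M`.  Then
`S = I ∖ V(M)` is consistent w.r.t. `Σ` and `dist(S, I) = 2|M| ≤ 2 · opt(I)`. -/
theorem stmt15 {α V : Type*} [DecidableEq V] [DecidableEq (α → V)]
    (FDs : Finset (Finset α × Finset α)) (I : Finset (α → V))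
    (M : Finset ((α → V) × (α → V)))
    (hedge : ∀ e ∈ M, e.1 ∈ I ∧ e.2 ∈ I ∧ IsConflict FDs e.1 e.2)
    (hmatch : ∀ e ∈ M, ∀ e' ∈ M, e ≠ e' →
      e.1 ≠ e'.1 ∧ e.1 ≠ e'.2 ∧ e.2 ≠ e'.1 ∧ e.2 ≠ e'.2)
    (hmaximal : ∀ s ∈ I, ∀ t ∈ I, IsConflict FDs s t →
      ∃ e ∈ M, s = e.1 ∨ s = e.2 ∨ t = e.1 ∨ t = e.2) :
    Consistent FDs (I \ (M.image Prod.fst ∪ M.image Prod.snd)) ∧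
      I.card - (I \ (M.image Prod.fst ∪ M.image Prod.snd)).card = 2 * M.card ∧
      2 * M.card ≤ 2 * opt FDs I := by

  classical
  set Vm := M.image Prod.fst ∪ M.image Prod.snd with hVm
  have hne : ∀ e ∈ M, e.1 ≠ e.2 := by
    intro e he heq
    obtain ⟨_, _, fd, _, _, a, _, hna⟩ := hedge e he
    exact hna (by rw [heq])
  have hmemV : ∀ e ∈ M, e.1 ∈ Vm ∧ e.2 ∈ Vm := by
    intro e he
    constructor
    · exact Finset.mem_union_left _ (Finset.mem_image_of_mem _ he)
    · exact Finset.mem_union_right _ (Finset.mem_image_of_mem _ he)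
  have hcons : Consistent FDs (I \ Vm) := by
    intro s hs t ht hc
    obtain ⟨hsI, hsV⟩ := Finset.mem_sdiff.mp hs
    obtain ⟨htI, htV⟩ := Finset.mem_sdiff.mp ht
    obtain ⟨e, he, hcase⟩ := hmaximal s hsI t htI hc
    obtain ⟨h1, h2⟩ := hmemV e he
    rcases hcase with h | h | h | h
    · exact hsV (h ▸ h1)
    · exact hsV (h ▸ h2)
    · exact htV (h ▸ h1)
    · exact htV (h ▸ h2)
  have hVsub : Vm ⊆ I := by
    intro x hx
    rcases Finset.mem_union.mp hx with h | h <;>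
      obtain ⟨e, he, rfl⟩ := Finset.mem_image.mp h
    · exact (hedge e he).1
    · exact (hedge e he).2.1
  have hcard1 : (M.image Prod.fst).card = M.card :=
    Finset.card_image_of_injOn (by
      intro e he e' he' h
      by_contra hne'
      exact (hmatch e he e' he' hne').1 h)
  have hcard2 : (M.image Prod.snd).card = M.card :=
    Finset.card_image_of_injOn (by
      intro e he e' he' h
      by_contra hne'
      exact (hmatch e he e' he' hne').2.2.2 h)
  have hdisj : Disjoint (M.image Prod.fst) (M.image Prod.snd) := by
    rw [Finset.disjoint_left]
    intro x h1 h2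
    obtain ⟨e, he, rfl⟩ := Finset.mem_image.mp h1
    obtain ⟨e', he', h'⟩ := Finset.mem_image.mp h2
    by_cases heq : e = e'
    · exact hne e he (heq ▸ h'.symm)
    · exact (hmatch e' he' e he (Ne.symm heq)).2.2.1 h'
  have hVcard : Vm.card = 2 * M.card := by
    rw [hVm, Finset.card_union_of_disjoint hdisj, hcard1, hcard2]
    ring
  have hVle : 2 * M.card ≤ I.card := by
    rw [← hVcard]; exact Finset.card_le_card hVsub
  have hcardeq : I.card - (I \ Vm).card = 2 * M.card := by
    rw [Finset.card_sdiff_of_subset hVsub, hVcard, Nat.sub_sub_self hVle]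
  refine ⟨hcons, hcardeq, ?_⟩
  have key : ∀ J ⊆ I, Consistent FDs J → M.card ≤ I.card - J.card := by
    intro J hJ hJcons
    set f : (α → V) × (α → V) → (α → V) := fun e => if e.1 ∈ J then e.2 else e.1 with hf
    have hmaps : ∀ e ∈ M, f e ∈ I \ J := by
      intro e he
      obtain ⟨h1, h2, hc⟩ := hedge e he
      by_cases h : e.1 ∈ J
      · simp only [hf, if_pos h]
        refine Finset.mem_sdiff.mpr ⟨h2, fun h2J => ?_⟩
        exact hJcons e.1 h e.2 h2J hc
      · simp only [hf, if_neg h]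
        exact Finset.mem_sdiff.mpr ⟨h1, h⟩
    have hcases : ∀ e ∈ M, f e = e.1 ∨ f e = e.2 := by
      intro e he
      by_cases h : e.1 ∈ J
      · right; simp [hf, if_pos h]
      · left; simp [hf, if_neg h]
    have hinj : Set.InjOn f M := by
      intro e he e' he' h
      by_contra hne'
      obtain ⟨a1, a2, a3, a4⟩ := hmatch e (by simpa using he) e' (by simpa using he') hne'
      rcases hcases e (by simpa using he) with h1 | h1 <;>
        rcases hcases e' (by simpa using he') with h2 | h2 <;>
        rw [h1, h2] at h
      · exact a1 h
      · exact a2 h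
      · exact a3 h
      · exact a4 h
    calc M.card ≤ (I \ J).card := Finset.card_le_card_of_injOn f hmaps hinj
      _ = I.card - J.card := Finset.card_sdiff_of_subset hJ
  have hopt : M.card ≤ opt FDs I := by
    apply le_csInf
    · exact ⟨I.card, ∅, Finset.empty_subset I, fun s hs => absurd hs (Finset.notMem_empty s),
        by simp⟩
    · rintro d ⟨J, hJ, hJcons, rfl⟩
      exact key J hJ hJcons
  exact Nat.mul_le_mul_left 2 hopt
end
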